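/- Let S ⊆ ℝ^p be compact with diameter D, let μ be a probability measure supported on S, let x ∉ S with dist(x,S) ≥ δ > 0. Then for every d ≥ 1, s(d)·Λ_{μ,d}(x) ≤ 2^{3 - δd/(δ+D)} · d^p · (e/p)^p · exp(p²/d), where s(d) = C(p+d,d). -/

import Mathlib

open MeasureTheory

/-- The Christoffel function `Λ_{μ,d}(x) = inf {∫ P² dμ : deg P ≤ d, P(x) = 1}`
for a measure on Euclidean space `ℝ^p`. -/
noncomputable def chrLambda (p d : ℕ) (μ : Measure (EuclideanSpace ℝ (Fin p)))
    (x : EuclideanSpace ℝ (Fin p)) : ℝ :=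
  sInf {y | ∃ P : MvPolynomial (Fin p) ℝ, P.totalDegree ≤ d ∧
    MvPolynomial.eval (x : Fin p → ℝ) P = 1 ∧
    y = ∫ z, (MvPolynomial.eval (z : Fin p → ℝ) P) ^ 2 ∂μ}

/-!
Compose the Chebyshev polynomial `T_n` with the affine function of `‖z - x‖²` that maps
`[a², b²]` onto `[-1, 1]`, where `a = dist(x, S)` and `b = a + diam S`. It sends `x` to
`cosh y` with `exp y = (b + a) / (b - a) ≥ 1 + a / b ≥ 2 ^ (a / b)`, so, normalised to be `1`
at `x`, this needle of degree `2n` is at most `2 ^ (1 - n a / b)` on `S`. With `n = ⌊d / 2⌋` its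
square integrates to at most `2 ^ (3 - d a / b)` against `μ`, which bounds `Λ_{μ,d}(x)`;
finally `C(p + d, p) ≤ (p + d) ^ p / p! ≤ d ^ p exp (p² / d) (e / p) ^ p`.
-/

section Needle

open Polynomial

lemma two_rpow_le_one_add {t : ℝ} (h0 : 0 ≤ t) (h1 : t ≤ 1) : (2 : ℝ) ^ t ≤ 1 + t := by
  simpa [one_add_one_eq_two] using rpow_one_add_le_one_add_mul_self (s := 1) (by norm_num) h0 h1

lemma exp_mul_le_two_mul_eval_T_cosh (n : ℤ) (y : ℝ) :
    Real.exp (n * y) ≤ 2 * (Chebyshev.T ℝ n).eval (Real.cosh y) := by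
  rw [Chebyshev.T_real_cosh, Real.cosh_eq]
  linarith [Real.exp_pos (-(n * y))]

theorem exists_needle_polynomial {a b : ℝ} (ha : 0 ≤ a) (hab : a < b) (n : ℕ) :
    ∃ Q : ℝ[X], Q.natDegree ≤ n ∧ Q.eval 0 = 1 ∧
      ∀ t ∈ Set.Icc (a ^ 2) (b ^ 2), |Q.eval t| ≤ 2 ^ (1 - a / b * n) := by
  have hb : 0 < b := ha.trans_lt hab
  have hba : 0 < b ^ 2 - a ^ 2 := by nlinarith
  -- `Q = T_n ∘ ℓ / T_n (ℓ 0)`, where `ℓ` maps `[a², b²]` onto `[-1, 1]`.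
  set ℓ : ℝ[X] :=
    C ((a ^ 2 + b ^ 2) / (b ^ 2 - a ^ 2)) - C (2 / (b ^ 2 - a ^ 2)) * X
  have hℓ : ∀ t, ℓ.eval t = (a ^ 2 + b ^ 2 - 2 * t) / (b ^ 2 - a ^ 2) := fun t => by
    simp only [ℓ, eval_sub, eval_mul, eval_C, eval_X]; ring
  set y := Real.log ((b + a) / (b - a))
  have hℓ0 : ℓ.eval 0 = Real.cosh y := by
    have : b - a ≠ 0 := (sub_pos.2 hab).ne'
    have : b + a ≠ 0 := by linarith
    rw [hℓ, Real.cosh_log (div_pos (by linarith) (by linarith))]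
    field_simp
    ring
  set c := (Chebyshev.T ℝ n).eval (Real.cosh y)
  have hc : 2 ^ (a / b * n) ≤ 2 * c := calc
    (2 : ℝ) ^ (a / b * n) = (2 ^ (a / b)) ^ n := by
      rw [Real.rpow_mul zero_le_two, Real.rpow_natCast]
    _ ≤ (1 + a / b) ^ n := by
      gcongr
      exact two_rpow_le_one_add (by positivity) ((div_le_one hb).2 hab.le)
    _ ≤ ((b + a) / (b - a)) ^ n := by
      gcongr
      rw [le_div_iff₀ (by linarith), one_add_div hb.ne', div_mul_eq_mul_div, div_le_iff₀ hb]
      nlinarith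
    _ = Real.exp (n * y) := by
      rw [Real.exp_nat_mul, Real.exp_log (div_pos (by linarith) (by linarith))]
    _ ≤ 2 * c := by exact_mod_cast exp_mul_le_two_mul_eval_T_cosh n y
  have hc0 : 0 < c := by linarith [Real.rpow_pos_of_pos two_pos (a / b * n)]
  refine ⟨C c⁻¹ * (Chebyshev.T ℝ n).comp ℓ, ?_, ?_, fun t ht => ?_⟩
  · refine (natDegree_C_mul_le _ _).trans (natDegree_comp_le.trans ?_)
    rw [Chebyshev.natDegree_T, Int.natAbs_natCast]
    have : ℓ.natDegree ≤ 1 := by simp only [ℓ]; compute_degree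
    nlinarith
  · rw [eval_mul, eval_C, eval_comp, hℓ0, inv_mul_cancel₀ hc0.ne']
  · have hℓt : |ℓ.eval t| ≤ 1 := by
      rw [hℓ, abs_le, le_div_iff₀ hba, div_le_one hba]
      constructor <;> nlinarith [ht.1, ht.2]
    calc |(C c⁻¹ * (Chebyshev.T ℝ n).comp ℓ).eval t|
        = c⁻¹ * |(Chebyshev.T ℝ n).eval (ℓ.eval t)| := by
          rw [eval_mul, eval_C, eval_comp, abs_mul, abs_of_pos (inv_pos.2 hc0)]
      _ ≤ c⁻¹ :=
        mul_le_of_le_one_right (inv_pos.2 hc0).le (Chebyshev.abs_eval_T_real_le_one _ hℓt)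
      _ ≤ 2 ^ (1 - a / b * n) := by
        rw [Real.rpow_sub two_pos, Real.rpow_one, inv_le_comm₀ hc0 (by positivity), inv_div]
        linarith

end Needle

section Multivariate

open MvPolynomial

variable {σ R : Type*} [CommSemiring R]

lemma MvPolynomial.totalDegree_aeval_le (Q : Polynomial R) (r : MvPolynomial σ R) :
    (Polynomial.aeval r Q).totalDegree ≤ Q.natDegree * r.totalDegree := by
  rw [Polynomial.aeval_eq_sum_range]
  refine totalDegree_finsetSum_le fun i hi => (totalDegree_smul_le _ _).trans ?_
  exact (totalDegree_pow _ _).trans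
    (Nat.mul_le_mul_right _ (Nat.lt_succ_iff.mp (Finset.mem_range.mp hi)))

lemma MvPolynomial.eval_aeval (Q : Polynomial R) (r : MvPolynomial σ R) (z : σ → R) :
    eval z (Polynomial.aeval r Q) = Q.eval (eval z r) :=
  (Polynomial.aeval_algHom_apply (aeval z) r Q).symm

variable {ι : Type*} [Fintype ι]

noncomputable def sqDistPoly (x : EuclideanSpace ℝ ι) : MvPolynomial ι ℝ :=
  ∑ i, (X i - C (x i)) ^ 2

lemma eval_sqDistPoly (x z : EuclideanSpace ℝ ι) :
    eval (z : ι → ℝ) (sqDistPoly x) = dist x z ^ 2 := by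
  simp only [sqDistPoly, EuclideanSpace.dist_sq_eq, map_sum, map_pow, map_sub, eval_X, eval_C,
    Real.dist_eq, sq_abs]
  exact Finset.sum_congr rfl fun i _ => by ring

lemma totalDegree_sqDistPoly_le (x : EuclideanSpace ℝ ι) : (sqDistPoly x).totalDegree ≤ 2 := by
  refine totalDegree_finsetSum_le fun i _ => (totalDegree_pow _ _).trans ?_
  have : (X i - C (x i) : MvPolynomial ι ℝ).totalDegree ≤ 1 :=
    (totalDegree_sub_C_le _ _).trans (totalDegree_X i).le
  omega

theorem exists_mvPolynomial_needle {a b : ℝ} (ha : 0 ≤ a) (hab : a < b) (n : ℕ)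
    (x : EuclideanSpace ℝ ι) :
    ∃ P : MvPolynomial ι ℝ, P.totalDegree ≤ 2 * n ∧ eval (x : ι → ℝ) P = 1 ∧
      ∀ z : EuclideanSpace ℝ ι, a ≤ dist x z → dist x z ≤ b →
        |eval (z : ι → ℝ) P| ≤ 2 ^ (1 - a / b * n) := by
  obtain ⟨Q, hQdeg, hQ0, hQ⟩ := exists_needle_polynomial ha hab n
  refine ⟨Polynomial.aeval (sqDistPoly x) Q, ?_, ?_, fun z hz₁ hz₂ => ?_⟩
  · refine (totalDegree_aeval_le _ _).trans ?_
    rw [mul_comm 2]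
    exact Nat.mul_le_mul hQdeg (totalDegree_sqDistPoly_le x)
  · rw [eval_aeval, eval_sqDistPoly, dist_self, sq, zero_mul, hQ0]
  · rw [eval_aeval, eval_sqDistPoly]
    exact hQ _ ⟨pow_le_pow_left₀ ha hz₁ 2, pow_le_pow_left₀ dist_nonneg hz₂ 2⟩

lemma exists_totalDegree_le_one_eval_eq_one_eval_eq_zero {x s : EuclideanSpace ℝ ι}
    (h : x ≠ s) :
    ∃ P : MvPolynomial ι ℝ, P.totalDegree ≤ 1 ∧ eval (x : ι → ℝ) P = 1 ∧
      eval (s : ι → ℝ) P = 0 := by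
  obtain ⟨i, hi⟩ : ∃ i, x i ≠ s i := by
    by_contra! hxs
    exact h (PiLp.ext hxs)
  refine ⟨C (x i - s i)⁻¹ * (X i - C (s i)), ?_, ?_, ?_⟩
  · refine (totalDegree_mul _ _).trans ?_
    rw [totalDegree_C, zero_add]
    exact (totalDegree_sub_C_le _ _).trans (totalDegree_X i).le
  · simp only [map_mul, map_sub, eval_C, eval_X]
    exact inv_mul_cancel₀ (sub_ne_zero.mpr hi)
  · simp

end Multivariate

open Nat in
lemma inv_factorial_le_exp_one_div_pow (p : ℕ) :
    ((p ! : ℕ) : ℝ)⁻¹ ≤ (Real.exp 1 / p) ^ p := by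
  rcases p.eq_zero_or_pos with rfl | hp
  · simp
  · rw [div_pow, ← Real.exp_nat_mul, mul_one, le_div_iff₀ (by positivity), inv_mul_eq_div]
    exact Real.pow_div_factorial_le_exp p (Nat.cast_nonneg p) p

open Nat in
lemma cast_choose_add_le (p : ℕ) {d : ℕ} (hd : 0 < d) :
    ((p + d).choose d : ℝ) ≤ d ^ p * (Real.exp 1 / p) ^ p * Real.exp (p ^ 2 / d) := by
  have hdR : (0 : ℝ) < d := by exact_mod_cast hd
  calc ((p + d).choose d : ℝ) = ((p + d).choose p : ℝ) := by rw [Nat.choose_symm_add]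
    _ ≤ ((p + d : ℕ) : ℝ) ^ p / (p ! : ℕ) := Nat.choose_le_pow_div p (p + d)
    _ = d ^ p * (p / d + 1) ^ p * ((p ! : ℕ) : ℝ)⁻¹ := by
      rw [← mul_pow, mul_add, mul_div_cancel₀ _ hdR.ne', mul_one, div_eq_mul_inv]
      push_cast
      ring
    _ ≤ d ^ p * Real.exp (p / d) ^ p * (Real.exp 1 / p) ^ p := by
      gcongr
      · exact Real.add_one_le_exp _
      · exact inv_factorial_le_exp_one_div_pow p
    _ = d ^ p * (Real.exp 1 / p) ^ p * Real.exp (p ^ 2 / d) := by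
      rw [← Real.exp_nat_mul, mul_div_assoc', ← sq]
      ring

section Christoffel

open MvPolynomial

lemma integral_sq_le_sq_of_ae_abs_le {α : Type*} [MeasurableSpace α] {μ : Measure α}
    [IsProbabilityMeasure μ] {f : α → ℝ} {C : ℝ} (hf : ∀ᵐ z ∂μ, |f z| ≤ C) :
    ∫ z, f z ^ 2 ∂μ ≤ C ^ 2 := by
  have hbound : ∀ᵐ z ∂μ, ‖f z ^ 2‖ ≤ C ^ 2 := hf.mono fun z hz => by
    rw [norm_pow, Real.norm_eq_abs]
    exact pow_le_pow_left₀ (abs_nonneg _) hz 2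
  simpa using (le_abs_self _).trans (norm_integral_le_of_norm_le_const hbound)

variable {p d : ℕ} {μ : Measure (EuclideanSpace ℝ (Fin p))} {x : EuclideanSpace ℝ (Fin p)}

lemma chrLambda_nonneg : 0 ≤ chrLambda p d μ x :=
  Real.sInf_nonneg fun _ ⟨_, _, _, hy⟩ => hy ▸ integral_nonneg fun _ => sq_nonneg _

lemma chrLambda_le_integral {P : MvPolynomial (Fin p) ℝ} (hdeg : P.totalDegree ≤ d)
    (hx : eval (x : Fin p → ℝ) P = 1) :
    chrLambda p d μ x ≤ ∫ z, (eval (z : Fin p → ℝ) P) ^ 2 ∂μ :=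
  csInf_le ⟨0, fun _ ⟨_, _, _, hy⟩ => hy ▸ integral_nonneg fun _ => sq_nonneg _⟩
    ⟨P, hdeg, hx, rfl⟩

lemma chrLambda_le_sq_of_forall_abs_le [IsProbabilityMeasure μ]
    {S : Set (EuclideanSpace ℝ (Fin p))} (hsupp : μ Sᶜ = 0) {P : MvPolynomial (Fin p) ℝ}
    (hdeg : P.totalDegree ≤ d) (hx : eval (x : Fin p → ℝ) P = 1) {C : ℝ}
    (hP : ∀ z ∈ S, |eval (z : Fin p → ℝ) P| ≤ C) :
    chrLambda p d μ x ≤ C ^ 2 :=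
  (chrLambda_le_integral hdeg hx).trans <|
    integral_sq_le_sq_of_ae_abs_le <| (ae_iff.2 hsupp).mono hP

lemma one_sub_mul_half_mul_two_le {κ : ℝ} (hκ0 : 0 ≤ κ) (hκ1 : κ ≤ 1) (d : ℕ) :
    (1 - κ * (d / 2 : ℕ)) * 2 ≤ 3 - κ * d := by
  have : (d : ℝ) ≤ 2 * (d / 2 : ℕ) + 1 := by norm_cast; omega
  nlinarith

theorem chrLambda_le_two_rpow [IsProbabilityMeasure μ] (hd : 1 ≤ d)
    {S : Set (EuclideanSpace ℝ (Fin p))} (hS : Bornology.IsBounded S) (hsupp : μ Sᶜ = 0)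
    {δ : ℝ} (hδ : 0 < δ) (hdist : δ ≤ Metric.infDist x S) :
    chrLambda p d μ x ≤ 2 ^ (3 - δ * d / (δ + Metric.diam S)) := by
  have ha : 0 < Metric.infDist x S := hδ.trans_le hdist
  obtain ⟨s, hs⟩ : S.Nonempty := Set.nonempty_iff_ne_empty.2 fun h => by
    simp [h] at ha
  rcases (Metric.diam_nonneg (s := S)).eq_or_lt with hD | hD
  · -- `S = {s}`, which an affine polynomial annihilates.
    have hxs : x ≠ s := by
      rintro rfl
      exact ha.ne' (Metric.infDist_zero_of_mem hs)
    obtain ⟨P, hdeg, hPx, hPs⟩ := exists_totalDegree_le_one_eval_eq_one_eval_eq_zero hxs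
    have hP : ∀ z ∈ S, |eval (z : Fin p → ℝ) P| ≤ 0 := fun z hz => by
      have : dist z s ≤ 0 := hD ▸ Metric.dist_le_diam_of_mem hS hz hs
      rw [dist_le_zero.1 this, hPs, abs_zero]
    refine (chrLambda_le_sq_of_forall_abs_le hsupp (hdeg.trans hd) hPx hP).trans ?_
    rw [zero_pow two_ne_zero]
    positivity
  · set a := Metric.infDist x S
    set D := Metric.diam S
    set κ := a / (a + D)
    obtain ⟨P, hdeg, hPx, hP⟩ :=
      exists_mvPolynomial_needle ha.le (lt_add_of_pos_right a hD) (d / 2) x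
    have hPS : ∀ z ∈ S, |eval (z : Fin p → ℝ) P| ≤ 2 ^ (1 - κ * (d / 2 : ℕ)) :=
      fun z hz => hP z (Metric.infDist_le_dist_of_mem hz) (Metric.dist_le_infDist_add_diam hS hz)
    refine (chrLambda_le_sq_of_forall_abs_le hsupp (hdeg.trans (Nat.mul_div_le d 2)) hPx
      hPS).trans ?_
    rw [← Real.rpow_natCast, ← Real.rpow_mul zero_le_two]
    have hκ : δ / (δ + D) ≤ κ := by
      rw [div_le_div_iff₀ (by positivity) (by positivity)]
      nlinarith
    gcongr
    · norm_num
    calc (1 - κ * (d / 2 : ℕ)) * ((2 : ℕ) : ℝ) ≤ 3 - κ * d :=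
          one_sub_mul_half_mul_two_le (by positivity)
            (div_le_one_of_le₀ (by linarith) (by positivity)) d
      _ ≤ 3 - δ * d / (δ + D) := by
        rw [mul_div_right_comm]
        gcongr

end Christoffel

theorem christoffel_upper_bound_outside_general (p d : ℕ) (hd : 1 ≤ d)
    (μ : Measure (EuclideanSpace ℝ (Fin p))) [IsProbabilityMeasure μ]
    (S : Set (EuclideanSpace ℝ (Fin p))) (hS : IsCompact S) (hsupp : μ Sᶜ = 0)
    (x : EuclideanSpace ℝ (Fin p))
    (δ : ℝ) (hδ : 0 < δ) (hdist : δ ≤ Metric.infDist x S) :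
    ((p + d).choose d : ℝ) * chrLambda p d μ x ≤
      (2 : ℝ) ^ ((3 : ℝ) - δ * d / (δ + Metric.diam S)) * (d : ℝ) ^ p *
        (Real.exp 1 / p) ^ p * Real.exp ((p : ℝ) ^ 2 / d) := by
  calc ((p + d).choose d : ℝ) * chrLambda p d μ x
      ≤ ((d : ℝ) ^ p * (Real.exp 1 / p) ^ p * Real.exp ((p : ℝ) ^ 2 / d)) *
          2 ^ ((3 : ℝ) - δ * d / (δ + Metric.diam S)) :=
        mul_le_mul (cast_choose_add_le p hd)
          (chrLambda_le_two_rpow hd hS.isBounded hsupp hδ hdist) chrLambda_nonneg (by positivity)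
    _ = _ := by ring

/-- Upper bound on the scaled Christoffel function outside the support: if `μ` is a
probability measure supported on a compact set `S` of diameter `D`, `x ∉ S` with
`dist(x,S) ≥ δ > 0`, then for every `d ≥ 1`,
`s(d)·Λ_{μ,d}(x) ≤ 2^{3-δd/(δ+D)}·d^p·(e/p)^p·exp(p²/d)` with `s(d) = C(p+d,d)`. -/
theorem christoffel_upper_bound_outside (p d : ℕ) (hp : 1 ≤ p) (hd : 1 ≤ d)
    (μ : Measure (EuclideanSpace ℝ (Fin p))) [IsProbabilityMeasure μ]
    (S : Set (EuclideanSpace ℝ (Fin p))) (hS : IsCompact S) (hsupp : μ Sᶜ = 0)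
    (x : EuclideanSpace ℝ (Fin p)) (hx : x ∉ S)
    (δ : ℝ) (hδ : 0 < δ) (hdist : δ ≤ Metric.infDist x S) :
    ((p + d).choose d : ℝ) * chrLambda p d μ x ≤
      (2 : ℝ) ^ ((3 : ℝ) - δ * d / (δ + Metric.diam S)) * (d : ℝ) ^ p *
        (Real.exp 1 / p) ^ p * Real.exp ((p : ℝ) ^ 2 / d) :=
  christoffel_upper_bound_outside_general p d hd μ S hS hsupp x δ hδ hdist
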